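/- Let T ∈ ℕ, Δt > 0, r > 0, and let l̄, f̄, ḡ, c_T : ℝ → ℝ with c_T differentiable. Suppose J⁰, φ⁰ : {0,…,T} → (ℝ → ℝ) are sequences of twice differentiable functions with J⁰_T = φ⁰_T = c_T, both satisfying for all t < T and x ∈ ℝ the backward recursion V_t(x) = l̄(x)·Δt + f̄(x)·(V_{t+1})'(x)·Δt − (ḡ(x)²/(2r))·((V_{t+1})'(x))²·Δt + V_{t+1}(x). Suppose J¹, φ¹ : {0,…,T} → (ℝ → ℝ) are sequences of differentiable functions with J¹_T = 0, φ¹_T = 0, satisfying for all t < T and x ∈ ℝ: J¹_t(x) = (f̄(x) − (ḡ(x)²/r)·(J⁰_{t+1})'(x))·(J¹_{t+1})'(x)·Δt + (1/2)·(J⁰_{t+1})''(x)·Δt + J¹_{t+1}(x), and φ¹_t(x) = (f̄(x) − (ḡ(x)²/r)·(φ⁰_{t+1})'(x))·(φ¹_{t+1})'(x)·Δt + (1/2)·(φ⁰_{t+1})''(x)·Δt + φ¹_{t+1}(x). Then J¹_t(x) = φ¹_t(x) for all t ≤ T and all x ∈ ℝ. -/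
import Mathlib


/-- Second-order claim of Proposition 1 (scalar case): the ε² coefficient `J¹` of the
optimal stochastic cost-to-go coincides with the ε² coefficient `φ¹` of the cost of the
deterministic optimal policy applied to the stochastic system. -/
theorem stmt_1
    (T : ℕ) (Δt r : ℝ) (hΔt : 0 < Δt) (hr : 0 < r)
    (lbar fbar gbar cT : ℝ → ℝ) (hcT : Differentiable ℝ cT)
    (J0 φ0 J1 φ1 : ℕ → ℝ → ℝ)
    (hJ0diff : ∀ t ≤ T, Differentiable ℝ (J0 t))
    (hJ0diff2 : ∀ t ≤ T, Differentiable ℝ (deriv (J0 t)))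
    (hφ0diff : ∀ t ≤ T, Differentiable ℝ (φ0 t))
    (hφ0diff2 : ∀ t ≤ T, Differentiable ℝ (deriv (φ0 t)))
    (hJ1diff : ∀ t ≤ T, Differentiable ℝ (J1 t))
    (hφ1diff : ∀ t ≤ T, Differentiable ℝ (φ1 t))
    (hJ0T : J0 T = cT) (hφ0T : φ0 T = cT)
    (hJ0 : ∀ t < T, ∀ x : ℝ,
      J0 t x = lbar x * Δt + fbar x * deriv (J0 (t + 1)) x * Δt
        - (gbar x ^ 2 / (2 * r)) * (deriv (J0 (t + 1)) x) ^ 2 * Δt + J0 (t + 1) x)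
    (hφ0 : ∀ t < T, ∀ x : ℝ,
      φ0 t x = lbar x * Δt + fbar x * deriv (φ0 (t + 1)) x * Δt
        - (gbar x ^ 2 / (2 * r)) * (deriv (φ0 (t + 1)) x) ^ 2 * Δt + φ0 (t + 1) x)
    (hJ1T : ∀ x : ℝ, J1 T x = 0) (hφ1T : ∀ x : ℝ, φ1 T x = 0)
    (hJ1 : ∀ t < T, ∀ x : ℝ,
      J1 t x = (fbar x - (gbar x ^ 2 / r) * deriv (J0 (t + 1)) x) * deriv (J1 (t + 1)) x * Δt
        + (1 / 2) * deriv (deriv (J0 (t + 1))) x * Δt + J1 (t + 1) x)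
    (hφ1 : ∀ t < T, ∀ x : ℝ,
      φ1 t x = (fbar x - (gbar x ^ 2 / r) * deriv (φ0 (t + 1)) x) * deriv (φ1 (t + 1)) x * Δt
        + (1 / 2) * deriv (deriv (φ0 (t + 1))) x * Δt + φ1 (t + 1) x) :
    ∀ t ≤ T, ∀ x : ℝ, J1 t x = φ1 t x := by
  have h0 : ∀ d t, t + d = T → J0 t = φ0 t := by
    intro d
    induction d with
    | zero =>
      intro t ht
      simp only [Nat.add_zero] at ht
      subst ht
      rw [hJ0T, hφ0T]
    | succ d ih =>
      intro t ht
      have h1 : J0 (t + 1) = φ0 (t + 1) := ih (t + 1) (by omega)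
      funext x
      rw [hJ0 t (by omega) x, hφ0 t (by omega) x, h1]
  have h1 : ∀ d t, t + d = T → ∀ x : ℝ, J1 t x = φ1 t x := by
    intro d
    induction d with
    | zero =>
      intro t ht x
      simp only [Nat.add_zero] at ht
      subst ht
      rw [hJ1T, hφ1T]
    | succ d ih =>
      intro t ht x
      have heq : J1 (t + 1) = φ1 (t + 1) := funext (ih (t + 1) (by omega))
      rw [hJ1 t (by omega) x, hφ1 t (by omega) x, heq, h0 d (t + 1) (by omega)]
  intro t ht x
  exact h1 (T - t) t (by omega) x
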